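/- Let f = (f_x)_{x∈𝒢} ∈ ⊕_{x∈𝒢} C(Δ_x; ℤ) and suppose L_α f ∈ ℜ. Then for every x ∈ 𝒢 the function f_x is constant on Δ_x; that is, there exists n_x ∈ ℤ with f_x = n_x · 1_{Δ_x}. -/

import Mathlib

open OnePoint

noncomputable section

namespace CKO

variable {G : Type*}

/-- The submonoid `𝔽⁺` of the free group generated by the generators. -/
def pos (G : Type*) : Submonoid (FreeGroup G) :=
  Submonoid.closure (Set.range (FreeGroup.of : G → FreeGroup G))

/-- The defining relations of `Ω_A^τ` for a subset `ξ ⊆ 𝔽`, identified with a point of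
`{0,1}^𝔽`: (a) `e ∈ ξ` and `ξ` contains every initial subword (prefix of the reduced word) of
each of its elements; (b) each `ω ∈ ξ` has at most one `y ∈ G` with `ωy ∈ ξ`; (c) if
`ω, ωy ∈ ξ` then `ωx⁻¹ ∈ ξ ↔ A(x,y) = 1`. -/
def IsCK [DecidableEq G] (A : G → G → Bool) (ξ : FreeGroup G → Bool) : Prop :=
  ξ 1 = true ∧
  (∀ ω : FreeGroup G, ξ ω = true → ∀ p : List (G × Bool), p <+: ω.toWord →
    ξ (FreeGroup.mk p) = true) ∧
  (∀ ω : FreeGroup G, ξ ω = true → ∀ y z : G,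
    ξ (ω * FreeGroup.of y) = true → ξ (ω * FreeGroup.of z) = true → y = z) ∧
  (∀ ω : FreeGroup G, ξ ω = true → ∀ y : G, ξ (ω * FreeGroup.of y) = true →
    ∀ x : G, (ξ (ω * (FreeGroup.of x)⁻¹) = true ↔ A x y = true))

/-- `ξ` is unbounded: it has no upper bound in `𝔽` for the left order `s ≤ t ↔ s⁻¹t ∈ 𝔽⁺`. -/
def Unbounded (ξ : FreeGroup G → Bool) : Prop :=
  ¬ ∃ t : FreeGroup G, ∀ s : FreeGroup G, ξ s = true → s⁻¹ * t ∈ pos G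

/-- `Ω̃_A`: the closure in `{0,1}^𝔽` of the set of unbounded elements of `Ω_A^τ`. -/
def OmegaT [DecidableEq G] (A : G → G → Bool) : Set (FreeGroup G → Bool) :=
  closure {ξ | IsCK A ξ ∧ Unbounded ξ}

end CKO

namespace CKO

variable {G : Type*} [DecidableEq G]

/-- Membership in `⊕_{x∈G} C(Δ_x; ℤ)`: finitely many nonzero components, each vanishing
outside `Δ_x` and restricting to a continuous function on `Ω̃_A`. -/
def MemDirectSum (A : G → G → Bool) (f : G → (FreeGroup G → Bool) → ℤ) : Prop :=
  {x : G | f x ≠ 0}.Finite ∧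
  (∀ (x : G) (ξ : FreeGroup G → Bool),
    (ξ ∉ OmegaT A ∨ ξ (FreeGroup.of x) ≠ true) → f x ξ = 0) ∧
  (∀ x : G, Continuous fun ξ : OmegaT A => f x (ξ : FreeGroup G → Bool))

/-- The map `L_α`: `(L_α f)(ξ) = Σ_x f_x(ξ) − Σ_{x : x⁻¹ ∈ ξ} f_x(xξ)`. -/
def Lalpha (f : G → (FreeGroup G → Bool) → ℤ) (ξ : FreeGroup G → Bool) : ℤ :=
  (∑ᶠ x : G, f x ξ) -
    ∑ᶠ x : G, if ξ ((FreeGroup.of x)⁻¹) = true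
      then f x fun ω => ξ ((FreeGroup.of x)⁻¹ * ω) else 0

/-- The ring `ℜ` of functions on `Ω̃_A` generated by `1` and the characteristic functions of
the `Δ_i` and `Δ_{i⁻¹}`. -/
def frakR (A : G → G → Bool) : Subring (OmegaT A → ℤ) :=
  Subring.closure
    ((Set.range fun i : G => fun ξ : OmegaT A =>
        if (ξ : FreeGroup G → Bool) (FreeGroup.of i) = true then (1 : ℤ) else 0) ∪
     (Set.range fun i : G => fun ξ : OmegaT A =>
        if (ξ : FreeGroup G → Bool) ((FreeGroup.of i)⁻¹) = true then (1 : ℤ) else 0))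

end CKO

/-!
Write `Δ_z` for the points of `Ω̃_A` whose first letter is `z`. On `Δ_z` the CK relations determine
every coordinate off the branch through `z` from `z` and `A` alone; in particular all points of
`Δ_z` have the same depth-one coordinates, which is all an element of `ℜ` sees. Hence
`L_α f (ξ) = f_z ξ - Σ_{A(x,z) = 1} f_x (xξ)` is the same for all `ξ ∈ Δ_z`. If `ξ, ξ' ∈ Δ_z` agree
on the ball of radius `n`, their translates `xξ, xξ'` agree on the ball of radius `n + 1`; so if
every `f_x` sees only the ball of radius `n + 1`, then `f_z` sees only the ball of radius `n`.
By compactness the finitely many nonzero `f_x` see only some finite ball, and descending to radius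
`0` shows that `f_z` is constant on `Δ_z`.
-/

namespace CKO

open FreeGroup

variable {G : Type*}

theorem mk_cons_false (x : G) (L : List (G × Bool)) :
    mk ((x, false) :: L) = (of x)⁻¹ * mk L := by
  rw [of, inv_mk, mul_mk]; rfl

theorem mk_singleton_false (x : G) : mk [(x, false)] = (of x)⁻¹ :=
  (mk_cons_false x []).trans (mul_one _)

/-- The translate `wξ = {wω : ω ∈ ξ}` of the paper. -/
def translate (w : G) (ξ : FreeGroup G → Bool) : FreeGroup G → Bool :=
  fun ω => ξ ((of w)⁻¹ * ω)

theorem Unbounded.translate {ξ : FreeGroup G → Bool} {w : G} (h : Unbounded ξ) :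
    Unbounded (translate w ξ) := by
  rintro ⟨t, ht⟩
  refine h ⟨(of w)⁻¹ * t, fun s hs => ?_⟩
  simpa [mul_assoc] using ht (of w * s) (by simpa [CKO.translate] using hs)

variable [DecidableEq G]

theorem toWord_of_inv_mul (w : G) (t : FreeGroup G) :
    (∃ L, t.toWord = (w, true) :: L ∧ ((of w)⁻¹ * t).toWord = L) ∨
      ((of w)⁻¹ * t).toWord = (w, false) :: t.toWord := by
  have ht : IsReduced t.toWord := isReduced_toWord
  rw [← mk_toWord (x := t), ← mk_cons_false, toWord_mk, toWord_mk, reduce_toWord]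
  rcases hL : t.toWord with _ | ⟨⟨y, b⟩, L⟩
  · exact .inr rfl
  rw [hL] at ht
  by_cases hy : y = w ∧ b = true
  · obtain ⟨rfl, rfl⟩ := hy
    refine .inl ⟨L, rfl, ?_⟩
    exact (reduce.Step.eq (Red.Step.cons_not (b := false))).trans
      (ht.infix (List.suffix_cons _ _).isInfix).reduce_eq
  · refine .inr (IsReduced.reduce_eq ?_)
    rw [isReduced_cons_cons]
    refine ⟨fun h => ?_, ht⟩
    cases b <;> simp_all

variable {A : G → G → Bool} {ξ ξ' : FreeGroup G → Bool} {w y z : G}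

namespace IsCK

theorem mk_mem_of_prefix (hξ : IsCK A ξ) {L p : List (G × Bool)} (hL : IsReduced L)
    (hp : p <+: L) (h : ξ (mk L) = true) : ξ (mk p) = true :=
  hξ.2.1 _ h p (by rwa [toWord_mk, hL.reduce_eq])

theorem eq_of_apply_of (hξ : IsCK A ξ) (hy : ξ (of y) = true) (hz : ξ (of z) = true) :
    y = z :=
  hξ.2.2.1 1 hξ.1 y z (by rwa [one_mul]) (by rwa [one_mul])

theorem apply_of (hξ : IsCK A ξ) (hz : ξ (of z) = true) (y : G) :
    ξ (of y) = decide (y = z) := by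
  by_cases hy : y = z
  · simpa [hy] using hz
  · simpa [hy] using mt (hξ.eq_of_apply_of · hz) hy

theorem apply_of_inv (hξ : IsCK A ξ) (hz : ξ (of z) = true) (x : G) :
    ξ (of x)⁻¹ = A x z :=
  Bool.eq_iff_iff.mpr (by simpa only [one_mul] using hξ.2.2.2 1 hξ.1 z (by rwa [one_mul]) x)

theorem translate_apply_of (hξ : IsCK A ξ) : translate w ξ (of w) = true := by
  simpa [CKO.translate] using hξ.1

protected theorem translate (hξ : IsCK A ξ) (hw : ξ (of w)⁻¹ = true) :
    IsCK A (translate w ξ) := by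
  refine ⟨by simpa [CKO.translate] using hw, fun ω hω p hp => ?_, fun ω hω y z hy hz => ?_,
    fun ω hω y hy x => ?_⟩
  · simp only [CKO.translate] at hω ⊢
    rcases toWord_of_inv_mul w ω with ⟨L, hωL, hL⟩ | hω'
    · rw [hωL] at hp
      rcases p with _ | ⟨a, q⟩
      · exact (mul_one (of w)⁻¹).symm ▸ hw
      obtain ⟨rfl, hq⟩ := List.cons_prefix_cons.mp hp
      rw [show mk ((w, true) :: q) = of w * mk q from rfl, inv_mul_cancel_left]
      exact hξ.2.1 _ hω q (hL ▸ hq)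
    · rw [← mk_cons_false]
      exact hξ.2.1 _ hω _ (hω' ▸ List.cons_prefix_cons.mpr ⟨rfl, hp⟩)
  · simp only [CKO.translate, ← mul_assoc] at hω hy hz
    exact hξ.2.2.1 _ hω y z hy hz
  · simp only [CKO.translate, ← mul_assoc] at hω hy ⊢
    exact hξ.2.2.2 _ hω y hy x

/-- Induction on the reduced word: a first letter `x⁻¹` is present iff `A x z`, and the rest of
the word is then read in the translates by `x`, whose first letter is `x`. -/
theorem apply_eq_off_branch (hξ : IsCK A ξ) (hξ' : IsCK A ξ') (hz : ξ (of z) = true)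
    (hz' : ξ' (of z) = true) {t : FreeGroup G} (ht : (z, true) ∉ t.toWord.head?) :
    ξ t = ξ' t := by
  obtain ⟨L, hL, rfl⟩ : ∃ L, IsReduced L ∧ mk L = t := ⟨t.toWord, isReduced_toWord, mk_toWord⟩
  rw [toWord_mk, hL.reduce_eq] at ht
  induction L generalizing ξ ξ' z with
  | nil => exact hξ.1.trans hξ'.1.symm
  | cons a L ih =>
    have habsent : ∀ ζ, IsCK A ζ → ζ (mk [a]) = false → ζ (mk (a :: L)) = false := by
      intro ζ hζ ha
      by_contra h
      simpa [ha] using hζ.mk_mem_of_prefix hL (p := [a]) ⟨L, rfl⟩ (by simpa using h)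
    obtain ⟨x, _ | _⟩ := a
    · have hx : ξ (of x)⁻¹ = ξ' (of x)⁻¹ := by rw [hξ.apply_of_inv hz, hξ'.apply_of_inv hz']
      by_cases hxξ : ξ (of x)⁻¹ = true
      · have hhead : (x, true) ∉ L.head? := by
          rcases L with _ | ⟨b, L⟩
          · simp
          · rintro ⟨⟩
            simp at hL
        rw [mk_cons_false]
        exact ih (hξ.translate hxξ) (hξ'.translate (hx ▸ hxξ)) hξ.translate_apply_of
          hξ'.translate_apply_of (hL.infix (List.suffix_cons _ _).isInfix) hhead
      · rw [habsent ξ hξ (by simpa [mk_singleton_false] using hxξ),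
          habsent ξ' hξ' (by simpa [mk_singleton_false, ← hx] using hxξ)]
    · have hxz : x ≠ z := by rintro rfl; exact ht rfl
      rw [habsent ξ hξ (by simpa [← of.eq_def, hξ.apply_of hz] using hxz),
        habsent ξ' hξ' (by simpa [← of.eq_def, hξ'.apply_of hz'] using hxz)]

end IsCK

theorem isClosed_setOf_isCK : IsClosed {ξ | IsCK A ξ} := by
  have hcoord : ∀ {Y : Type} [TopologicalSpace Y] [DiscreteTopology Y]
      {g : (FreeGroup G → Bool) → Y}, Continuous g → ∀ P : Y → Prop, IsClosed {ξ | P (g ξ)} :=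
    fun hg P => (isClosed_discrete {y | P y}).preimage hg
  have hset : {ξ | IsCK A ξ} = {ξ | ξ 1 = true} ∩
      (⋂ (ω : FreeGroup G) (p : List (G × Bool)) (_ : p <+: ω.toWord),
        {ξ | ξ ω = true → ξ (mk p) = true}) ∩
      (⋂ (ω : FreeGroup G) (y : G) (z : G),
        {ξ | ξ ω = true → ξ (ω * of y) = true → ξ (ω * of z) = true → y = z}) ∩
      (⋂ (ω : FreeGroup G) (y : G) (x : G),
        {ξ | ξ ω = true → ξ (ω * of y) = true → (ξ (ω * (of x)⁻¹) = true ↔ A x y = true)}) := by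
    ext ξ
    simp only [IsCK, Set.mem_ofPred_eq, Set.mem_inter_iff, Set.mem_iInter]
    grind
  rw [hset]
  refine .inter (.inter (.inter (hcoord (continuous_apply 1) (· = true)) ?_) ?_) ?_ <;>
    refine isClosed_iInter fun ω => isClosed_iInter fun a => isClosed_iInter fun b => ?_
  · exact hcoord (g := fun ξ => (ξ ω, ξ (mk a))) (by fun_prop) fun c => c.1 = true → c.2 = true
  · exact hcoord (g := fun ξ => (ξ ω, ξ (ω * of a), ξ (ω * of b))) (by fun_prop)
      fun c => c.1 = true → c.2.1 = true → c.2.2 = true → a = b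
  · exact hcoord (g := fun ξ => (ξ ω, ξ (ω * of a), ξ (ω * (of b)⁻¹))) (by fun_prop)
      fun c => c.1 = true → c.2.1 = true → (c.2.2 = true ↔ A b a = true)

theorem IsCK.of_mem_omegaT (hξ : ξ ∈ OmegaT A) : IsCK A ξ :=
  closure_minimal (fun _ hζ => hζ.1) isClosed_setOf_isCK hξ

theorem translate_mem_omegaT (hξ : ξ ∈ OmegaT A) (hw : ξ (of w)⁻¹ = true) :
    translate w ξ ∈ OmegaT A := by
  have hU : IsOpen ((fun ζ : FreeGroup G → Bool => ζ (of w)⁻¹) ⁻¹' {true}) :=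
    (isOpen_discrete _).preimage (continuous_apply _)
  refine map_mem_closure (continuous_pi fun ω => continuous_apply _)
    (hU.inter_closure ⟨hw, hξ⟩) ?_
  rintro ζ ⟨hζw, hζ, hζu⟩
  exact ⟨hζ.translate hζw, hζu.translate⟩

instance : CompactSpace (OmegaT A) :=
  isCompact_iff_compactSpace.mp isClosed_closure.isCompact

theorem exists_finset_eq_of_continuous {ι : Type*} {X : ι → Type*} [∀ i, TopologicalSpace (X i)]
    [∀ i, DiscreteTopology (X i)] {C : Set (∀ i, X i)} [CompactSpace C] {Y : Type*}
    [TopologicalSpace Y] [DiscreteTopology Y] {F : C → Y} (hF : Continuous F) :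
    ∃ I : Finset ι, ∀ a b : C, (∀ i ∈ I, a.1 i = b.1 i) → F a = F b := by
  classical
  have hcyl : ∀ a : C, ∃ I : Finset ι, ∀ b : C, (∀ i ∈ I, b.1 i = a.1 i) → F b = F a := by
    intro a
    obtain ⟨u, hu, hsub⟩ := (mem_nhds_subtype C a _).1
      (hF.continuousAt ((isOpen_discrete {F a}).mem_nhds rfl))
    rw [nhds_pi, Filter.mem_pi'] at hu
    obtain ⟨I, t, ht, hIt⟩ := hu
    refine ⟨I, fun b hb => hsub (hIt fun i hi => ?_)⟩
    rw [hb i hi]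
    exact mem_of_mem_nhds (ht i)
  choose I hI using hcyl
  obtain ⟨T, hT⟩ := CompactSpace.elim_nhds_subcover
    (fun a => Subtype.val ⁻¹' (Set.pi (I a) fun i => {a.1 i})) fun a =>
      ((isOpen_set_pi (I a).finite_toSet fun i _ => isOpen_discrete _).preimage
        continuous_subtype_val).mem_nhds fun i _ => rfl
  refine ⟨T.biUnion I, fun b b' hbb' => ?_⟩
  obtain ⟨a, ha, hb⟩ : ∃ a ∈ T, ∀ i ∈ I a, b.1 i = a.1 i := by
    have hbT : b ∈ ⋃ a ∈ T, Subtype.val ⁻¹' (Set.pi (I a) fun i => {a.1 i}) := hT ▸ trivial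
    simpa using hbT
  have hb' : ∀ i ∈ I a, b'.1 i = a.1 i := fun i hi =>
    (hbb' i (Finset.mem_biUnion.mpr ⟨a, ha, hi⟩)).symm.trans (hb i hi)
  exact (hI a b hb).trans (hI a b' hb').symm

theorem eq_of_mem_frakR {h : OmegaT A → ℤ} (hh : h ∈ frakR A) {ξ ξ' : OmegaT A}
    (hof : ∀ i, ξ.1 (of i) = ξ'.1 (of i)) (hinv : ∀ i, ξ.1 (of i)⁻¹ = ξ'.1 (of i)⁻¹) :
    h ξ = h ξ' := by
  induction hh using Subring.closure_induction with
  | mem g hg => rcases hg with ⟨i, rfl⟩ | ⟨i, rfl⟩ <;> simp [hof, hinv]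
  | zero | one => rfl
  | add _ _ _ _ ihx ihy | mul _ _ _ _ ihx ihy => simp [ihx, ihy]
  | neg _ _ ihx => simp [ihx]

def AgreeBelow (n : ℕ) (ξ ξ' : FreeGroup G → Bool) : Prop :=
  ∀ t : FreeGroup G, t.norm < n → ξ t = ξ' t

theorem IsCK.agreeBelow_translate (hξ : IsCK A ξ) (hξ' : IsCK A ξ') (hz : ξ (of z) = true)
    (hz' : ξ' (of z) = true) {n : ℕ} (h : AgreeBelow n ξ ξ') (w : G) :
    AgreeBelow (n + 1) (translate w ξ) (translate w ξ') := by
  intro t ht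
  rcases toWord_of_inv_mul w t with ⟨L, htL, hL⟩ | hneg
  · refine h _ ?_
    rw [FreeGroup.norm, htL, List.length_cons] at ht
    rwa [FreeGroup.norm, hL, ← Nat.succ_lt_succ_iff]
  · exact hξ.apply_eq_off_branch hξ' hz hz' (by simp [hneg])

variable {f : G → (FreeGroup G → Bool) → ℤ}

def DeterminedByBall (A : G → G → Bool) (f : G → (FreeGroup G → Bool) → ℤ) (n : ℕ) : Prop :=
  ∀ (z : G) (ξ ξ' : FreeGroup G → Bool), ξ ∈ OmegaT A → ξ' ∈ OmegaT A →
    ξ (of z) = true → ξ' (of z) = true → AgreeBelow n ξ ξ' → f z ξ = f z ξ'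

namespace MemDirectSum

theorem exists_determinedByBall (hf : MemDirectSum A f) : ∃ N, DeterminedByBall A f N := by
  classical
  choose I hI using fun z => exists_finset_eq_of_continuous (hf.2.2 z)
  refine ⟨(hf.1.toFinset.biUnion I).sup FreeGroup.norm + 1, fun z ξ ξ' hξ hξ' _ _ h => ?_⟩
  by_cases hz : f z = 0
  · simp [hz]
  refine hI z ⟨ξ, hξ⟩ ⟨ξ', hξ'⟩ fun t ht => h t (Nat.lt_succ_of_le (Finset.le_sup ?_))
  exact Finset.mem_biUnion.mpr ⟨z, hf.1.mem_toFinset.mpr hz, ht⟩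

theorem finsum_apply (hf : MemDirectSum A f) (hξ : IsCK A ξ) (hz : ξ (of z) = true) :
    ∑ᶠ x, f x ξ = f z ξ :=
  finsum_eq_single _ z fun x hx => hf.2.1 x ξ (.inr fun h => hx (hξ.eq_of_apply_of h hz))

theorem lalpha_eq (hf : MemDirectSum A f) (hξ : IsCK A ξ) (hz : ξ (of z) = true) :
    Lalpha f ξ = f z ξ - ∑ᶠ x, if A x z = true then f x (translate x ξ) else 0 := by
  simp_rw [Lalpha, hf.finsum_apply hξ hz, hξ.apply_of_inv hz]
  rfl

theorem determinedByBall_of_succ (hf : MemDirectSum A f)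
    (hL : (fun ξ : OmegaT A => Lalpha f ξ.1) ∈ frakR A) {n : ℕ}
    (h : DeterminedByBall A f (n + 1)) : DeterminedByBall A f n := by
  intro z ξ ξ' hξ hξ' hz hz' hn
  have hCK := IsCK.of_mem_omegaT hξ
  have hCK' := IsCK.of_mem_omegaT hξ'
  have hLξ : Lalpha f ξ = Lalpha f ξ' :=
    eq_of_mem_frakR hL (ξ := ⟨ξ, hξ⟩) (ξ' := ⟨ξ', hξ'⟩)
      (fun i => by simp only [hCK.apply_of hz, hCK'.apply_of hz'])
      (fun i => by simp only [hCK.apply_of_inv hz, hCK'.apply_of_inv hz'])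
  have hsum : (∑ᶠ x, if A x z = true then f x (translate x ξ) else 0) =
      ∑ᶠ x, if A x z = true then f x (translate x ξ') else 0 := by
    refine finsum_congr fun x => ?_
    split_ifs with hx
    · exact h x _ _ (translate_mem_omegaT hξ (hCK.apply_of_inv hz x ▸ hx))
        (translate_mem_omegaT hξ' (hCK'.apply_of_inv hz' x ▸ hx)) hCK.translate_apply_of
        hCK'.translate_apply_of (hCK.agreeBelow_translate hCK' hz hz' hn x)
    · rfl
  rw [hf.lalpha_eq hCK hz, hf.lalpha_eq hCK' hz', hsum] at hLξ
  omega

theorem apply_eq_of_mem (hf : MemDirectSum A f)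
    (hL : (fun ξ : OmegaT A => Lalpha f ξ.1) ∈ frakR A) (hξ : ξ ∈ OmegaT A)
    (hξ' : ξ' ∈ OmegaT A) (hz : ξ (of z) = true) (hz' : ξ' (of z) = true) : f z ξ = f z ξ' := by
  obtain ⟨N, hN⟩ := hf.exists_determinedByBall
  have h0 : DeterminedByBall A f 0 :=
    Nat.decreasingInduction (fun _ _ => hf.determinedByBall_of_succ hL) hN (Nat.zero_le N)
  exact h0 z ξ ξ' hξ hξ' hz hz' fun t ht => absurd ht (Nat.not_lt_zero _)

end MemDirectSum

end CKO

open scoped Classical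

theorem stmt_15_general {G : Type*} [DecidableEq G]
    (A : G → G → Bool)
    (f : G → (FreeGroup G → Bool) → ℤ) (hf : CKO.MemDirectSum A f)
    (hL : (fun ξ : CKO.OmegaT A => CKO.Lalpha f (ξ : FreeGroup G → Bool)) ∈ CKO.frakR A) :
    ∀ x : G, ∃ n : ℤ, ∀ ξ : FreeGroup G → Bool,
      f x ξ = if ξ ∈ CKO.OmegaT A ∧ ξ (FreeGroup.of x) = true then n else 0 := by
  intro x
  obtain ⟨n, hn⟩ : ∃ n : ℤ, ∀ ξ ∈ CKO.OmegaT A, ξ (FreeGroup.of x) = true → f x ξ = n := by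
    by_cases hΔ : ∃ ξ₀ ∈ CKO.OmegaT A, ξ₀ (FreeGroup.of x) = true
    · obtain ⟨ξ₀, hξ₀, hx₀⟩ := hΔ
      exact ⟨f x ξ₀, fun ξ hξ hx => hf.apply_eq_of_mem hL hξ hξ₀ hx hx₀⟩
    · exact ⟨0, fun ξ hξ hx => absurd ⟨ξ, hξ, hx⟩ hΔ⟩
  refine ⟨n, fun ξ => ?_⟩
  split_ifs with hξ
  · exact hn ξ hξ.1 hξ.2
  · exact hf.2.1 x ξ (not_and_or.mp hξ)

/-- If `f ∈ ⊕_{x∈G} C(Δ_x; ℤ)` and `L_α f ∈ ℜ`, then each component `f_x`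
is constant on `Δ_x`, i.e. `f_x = n_x · 1_{Δ_x}` for some integer `n_x`. -/
theorem stmt_15 {G : Type*} [Nonempty G] [DecidableEq G]
    (A : G → G → Bool) (hA : ∀ i : G, ∃ j : G, A i j = true)
    (f : G → (FreeGroup G → Bool) → ℤ) (hf : CKO.MemDirectSum A f)
    (hL : (fun ξ : CKO.OmegaT A => CKO.Lalpha f (ξ : FreeGroup G → Bool)) ∈ CKO.frakR A) :
    ∀ x : G, ∃ n : ℤ, ∀ ξ : FreeGroup G → Bool,
      f x ξ = if ξ ∈ CKO.OmegaT A ∧ ξ (FreeGroup.of x) = true then n else 0 :=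
  stmt_15_general A f hf hL
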